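/- Let X be a set and let 𝒜, ℬ be collections of subsets of X such that 𝒜 is Γ-like and closed under finite unions. Then α_{1.5}(𝒜,ℬ) implies α₂(𝒜,ℬ). -/

import Mathlib

/-! Refine the `A n` into pairwise disjoint infinite pieces, and let `D m` be the union of
infinitely many pieces of each of `A 0, …, A m`. Then the `D m` are pairwise disjoint, and each is
an infinite subset of `A 0 ∪ … ∪ A m`, hence lies in `𝒜`. So α_{1.5} yields `B ∈ ℬ` almost
containing `D m` for infinitely many `m`; for such an `m ≥ n`, `B` contains all but finitely many
points of the infinite set `D m ∩ A n`. -/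

open Set

/-- A collection `𝒜` of subsets of `X` is Γ-like if every member is infinite
and every infinite subset of a member is itself a member. -/
def GammaLike {X : Type*} (𝒜 : Set (Set X)) : Prop :=
  ∀ A ∈ 𝒜, A.Infinite ∧ ∀ A' ⊆ A, A'.Infinite → A' ∈ 𝒜

/-- A collection `𝒜` is almost-Γ-like if each `A ∈ 𝒜` has a countably infinite
subset `A'` all of whose cofinite subsets belong to `𝒜`. -/
def AlmostGammaLike {X : Type*} (𝒜 : Set (Set X)) : Prop :=
  ∀ A ∈ 𝒜, ∃ A' ⊆ A, A'.Countable ∧ A'.Infinite ∧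
    ∀ A'' ⊆ A', (A' \ A'').Finite → A'' ∈ 𝒜

/-- `𝒜` is closed under finite unions. -/
def UnionClosed {X : Type*} (𝒜 : Set (Set X)) : Prop :=
  ∀ A ∈ 𝒜, ∀ B ∈ 𝒜, A ∪ B ∈ 𝒜

/-- α₁(𝒜,ℬ): for every sequence from 𝒜 there is `B ∈ ℬ` with `A n \ B` finite for all `n`. -/
def Alpha1 {X : Type*} (𝒜 ℬ : Set (Set X)) : Prop :=
  ∀ A : ℕ → Set X, (∀ n, A n ∈ 𝒜) → ∃ B ∈ ℬ, ∀ n, (A n \ B).Finite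

/-- α₂(𝒜,ℬ): for every sequence from 𝒜 there is `B ∈ ℬ` meeting each `A n` infinitely. -/
def Alpha2 {X : Type*} (𝒜 ℬ : Set (Set X)) : Prop :=
  ∀ A : ℕ → Set X, (∀ n, A n ∈ 𝒜) → ∃ B ∈ ℬ, ∀ n, (A n ∩ B).Infinite

/-- α₂'(𝒜,ℬ): for every sequence from 𝒜 there is `B ∈ ℬ` meeting each `A n`. -/
def Alpha2' {X : Type*} (𝒜 ℬ : Set (Set X)) : Prop :=
  ∀ A : ℕ → Set X, (∀ n, A n ∈ 𝒜) → ∃ B ∈ ℬ, ∀ n, (A n ∩ B).Nonempty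

/-- α₃(𝒜,ℬ): for every sequence from 𝒜 there is `B ∈ ℬ` meeting infinitely many `A n` infinitely. -/
def Alpha3 {X : Type*} (𝒜 ℬ : Set (Set X)) : Prop :=
  ∀ A : ℕ → Set X, (∀ n, A n ∈ 𝒜) → ∃ B ∈ ℬ, {n | (A n ∩ B).Infinite}.Infinite

/-- α₄(𝒜,ℬ): for every sequence from 𝒜 there is `B ∈ ℬ` meeting infinitely many `A n`. -/
def Alpha4 {X : Type*} (𝒜 ℬ : Set (Set X)) : Prop :=
  ∀ A : ℕ → Set X, (∀ n, A n ∈ 𝒜) → ∃ B ∈ ℬ, {n | (A n ∩ B).Nonempty}.Infinite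

/-- α_{1.1}(𝒜,ℬ): α₁ restricted to pairwise disjoint sequences. -/
def Alpha1p1 {X : Type*} (𝒜 ℬ : Set (Set X)) : Prop :=
  ∀ A : ℕ → Set X, (∀ n, A n ∈ 𝒜) → (∀ m n, m ≠ n → Disjoint (A m) (A n)) →
    ∃ B ∈ ℬ, ∀ n, (A n \ B).Finite

/-- α_{1.5}(𝒜,ℬ): for pairwise disjoint sequences from 𝒜 there is `B ∈ ℬ` with
`A n \ B` finite for infinitely many `n`. -/
def Alpha1p5 {X : Type*} (𝒜 ℬ : Set (Set X)) : Prop :=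
  ∀ A : ℕ → Set X, (∀ n, A n ∈ 𝒜) → (∀ m n, m ≠ n → Disjoint (A m) (A n)) →
    ∃ B ∈ ℬ, {n | (A n \ B).Finite}.Infinite

/-- α_{2.1}(𝒜,ℬ): α₂ restricted to pairwise disjoint sequences. -/
def Alpha2p1 {X : Type*} (𝒜 ℬ : Set (Set X)) : Prop :=
  ∀ A : ℕ → Set X, (∀ n, A n ∈ 𝒜) → (∀ m n, m ≠ n → Disjoint (A m) (A n)) →
    ∃ B ∈ ℬ, ∀ n, (A n ∩ B).Infinite

/-- α_{3.1}(𝒜,ℬ): α₃ restricted to pairwise disjoint sequences. -/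
def Alpha3p1 {X : Type*} (𝒜 ℬ : Set (Set X)) : Prop :=
  ∀ A : ℕ → Set X, (∀ n, A n ∈ 𝒜) → (∀ m n, m ≠ n → Disjoint (A m) (A n)) →
    ∃ B ∈ ℬ, {n | (A n ∩ B).Infinite}.Infinite

/-- α_{4.1}(𝒜,ℬ): α₄ restricted to pairwise disjoint sequences. -/
def Alpha4p1 {X : Type*} (𝒜 ℬ : Set (Set X)) : Prop :=
  ∀ A : ℕ → Set X, (∀ n, A n ∈ 𝒜) → (∀ m n, m ≠ n → Disjoint (A m) (A n)) →
    ∃ B ∈ ℬ, {n | (A n ∩ B).Nonempty}.Infinite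

/-- Player I has a winning predetermined strategy in G₁(𝒜,ℬ). -/
def PredWinG1 {X : Type*} (𝒜 ℬ : Set (Set X)) : Prop :=
  ∃ A : ℕ → Set X, (∀ n, A n ∈ 𝒜) ∧
    ∀ a : ℕ → X, (∀ n, a n ∈ A n) → Set.range a ∉ ℬ

/-- Player I has a winning predetermined strategy in G_fin(𝒜,ℬ). -/
def PredWinGfin {X : Type*} (𝒜 ℬ : Set (Set X)) : Prop :=
  ∃ A : ℕ → Set X, (∀ n, A n ∈ 𝒜) ∧
    ∀ F : ℕ → Set X, (∀ n, (F n).Finite ∧ F n ⊆ A n) → (⋃ n, F n) ∉ ℬ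

/-- Player I has a winning predetermined strategy in G_{<2}(𝒜,ℬ),
where II picks at most one point each round. -/
def PredWinGlt2 {X : Type*} (𝒜 ℬ : Set (Set X)) : Prop :=
  ∃ A : ℕ → Set X, (∀ n, A n ∈ 𝒜) ∧
    ∀ F : ℕ → Set X, (∀ n, (F n).Subsingleton ∧ F n ⊆ A n) → (⋃ n, F n) ∉ ℬ

/-- Player I has a winning predetermined strategy in G_cf(𝒜,ℬ),
where II picks a cofinite subset each round. -/
def PredWinGcf {X : Type*} (𝒜 ℬ : Set (Set X)) : Prop :=
  ∃ A : ℕ → Set X, (∀ n, A n ∈ 𝒜) ∧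
    ∀ B : ℕ → Set X, (∀ n, B n ⊆ A n ∧ (A n \ B n).Finite) → (⋃ n, B n) ∉ ℬ

/-- Player I has a winning perfect-information strategy in G₁(𝒜,ℬ):
a function from finite sequences of points of X into 𝒜 defeating all counterplays. -/
def WinG1 {X : Type*} (𝒜 ℬ : Set (Set X)) : Prop :=
  ∃ σ : List X → Set X, (∀ s, σ s ∈ 𝒜) ∧
    ∀ a : ℕ → X, (∀ n, a n ∈ σ (List.ofFn fun i : Fin n => a i)) → Set.range a ∉ ℬ

/-- Player I has a winning perfect-information strategy in G_fin(𝒜,ℬ):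
a function from finite sequences of finite subsets of X into 𝒜 defeating all counterplays. -/
def WinGfin {X : Type*} (𝒜 ℬ : Set (Set X)) : Prop :=
  ∃ σ : List (Set X) → Set X, (∀ s : List (Set X), (∀ F ∈ s, F.Finite) → σ s ∈ 𝒜) ∧
    ∀ F : ℕ → Set X,
      (∀ n, (F n).Finite ∧ F n ⊆ σ (List.ofFn fun i : Fin n => F i)) →
      (⋃ n, F n) ∉ ℬ

/-- Player I has a winning perfect-information strategy in G_{<2}(𝒜,ℬ):
a function from finite sequences of at-most-singleton subsets of X into 𝒜
defeating all counterplays. -/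
def WinGlt2 {X : Type*} (𝒜 ℬ : Set (Set X)) : Prop :=
  ∃ σ : List (Set X) → Set X, (∀ s : List (Set X), (∀ F ∈ s, F.Subsingleton) → σ s ∈ 𝒜) ∧
    ∀ F : ℕ → Set X,
      (∀ n, (F n).Subsingleton ∧ F n ⊆ σ (List.ofFn fun i : Fin n => F i)) →
      (⋃ n, F n) ∉ ℬ

open Function

/-- Hall's marriage theorem applies because, after numbering the indices injectively, we may
shrink the `j`-th set to a finite subset of size one more than the number of `j`. -/
theorem exists_injective_forall_mem_of_infinite {κ X : Type*} [Countable κ] (S : κ → Set X)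
    (hS : ∀ j, (S j).Infinite) : ∃ g : κ → X, Injective g ∧ ∀ j, g j ∈ S j := by
  classical
  obtain ⟨e, he⟩ := Countable.exists_injective_nat κ
  choose t htS htcard using fun j => (hS j).exists_subset_card_eq (e j + 1)
  obtain ⟨g, hg, hgt⟩ := (Finset.all_card_le_biUnion_card_iff_exists_injective t).1 fun s => by
    rcases s.eq_empty_or_nonempty with rfl | hs
    · simp
    obtain ⟨j, hj, hjmax⟩ := s.exists_max_image e hs
    calc s.card = (s.image e).card := (Finset.card_image_of_injective s he).symm
      _ ≤ (Finset.range (e j + 1)).card :=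
        Finset.card_le_card fun n hn => by
          obtain ⟨i, hi, rfl⟩ := Finset.mem_image.1 hn
          exact Finset.mem_range_succ_iff.2 (hjmax i hi)
      _ = (t j).card := by rw [Finset.card_range, htcard]
      _ ≤ (s.biUnion t).card := Finset.card_le_card (Finset.subset_biUnion_of_mem t hj)
  exact ⟨g, hg, fun j => htS j (hgt j)⟩

theorem exists_pairwise_disjoint_infinite_subsets {ι X : Type*} [Countable ι] (S : ι → Set X)
    (hS : ∀ i, (S i).Infinite) :
    ∃ T : ι → Set X, (∀ i, T i ⊆ S i) ∧ (∀ i, (T i).Infinite) ∧ Pairwise (Disjoint on T) := by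
  obtain ⟨g, hg, hgS⟩ :=
    exists_injective_forall_mem_of_infinite (fun p : ι × ℕ => S p.1) fun p => hS p.1
  refine ⟨fun i => range fun k => g (i, k), ?_, ?_, ?_⟩
  · rintro i _ ⟨k, rfl⟩
    exact hgS (i, k)
  · exact fun i => infinite_range_of_injective fun k l hkl => (Prod.ext_iff.1 (hg hkl)).2
  · intro i i' hii'
    refine disjoint_left.2 ?_
    rintro _ ⟨k, rfl⟩ ⟨k', hk'⟩
    exact hii' (Prod.ext_iff.1 (hg hk')).1.symm

theorem exists_pairwise_disjoint_subset_accumulate {X : Type*} (A : ℕ → Set X)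
    (hA : ∀ n, (A n).Infinite) :
    ∃ D : ℕ → Set X, (∀ m, D m ⊆ accumulate A m) ∧ Pairwise (Disjoint on D) ∧
      ∀ m n, n ≤ m → (D m ∩ A n).Infinite := by
  obtain ⟨T, hTA, hTinf, hTdisj⟩ :=
    exists_pairwise_disjoint_infinite_subsets (fun p : ℕ × ℕ => A (min p.2 p.1)) fun p => hA _
  refine ⟨fun m => ⋃ n, T (m, n), ?_, ?_, ?_⟩
  · intro m
    exact iUnion_subset fun n => (hTA (m, n)).trans
      (subset_accumulate.trans (accumulate_subset_accumulate (min_le_right n m)))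
  · intro m m' hmm'
    exact disjoint_iUnion_left.2 fun n => disjoint_iUnion_right.2 fun n' =>
      hTdisj fun h => hmm' (Prod.ext_iff.1 h).1
  · intro m n hnm
    refine (hTinf (m, n)).mono (subset_inter (subset_iUnion_of_subset n subset_rfl) ?_)
    simpa only [min_eq_left hnm] using hTA (m, n)

theorem UnionClosed.accumulate_mem {X : Type*} {𝒜 : Set (Set X)} (hU : UnionClosed 𝒜)
    {A : ℕ → Set X} (hA : ∀ n, A n ∈ 𝒜) (m : ℕ) : accumulate A m ∈ 𝒜 := by
  induction m with
  | zero => simpa only [accumulate_zero_nat] using hA 0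
  | succ m ih => simpa only [accumulate_succ] using hU _ ih _ (hA (m + 1))

/-- If 𝒜 is Γ-like and closed under finite unions, then
α_{1.5}(𝒜,ℬ) implies α₂(𝒜,ℬ). -/
theorem stmt17 {X : Type*} (𝒜 ℬ : Set (Set X))
    (hA : GammaLike 𝒜) (hU : UnionClosed 𝒜) (h : Alpha1p5 𝒜 ℬ) :
    Alpha2 𝒜 ℬ := by
  intro A hA𝒜
  obtain ⟨D, hDA, hDdisj, hDinf⟩ :=
    exists_pairwise_disjoint_subset_accumulate A fun n => (hA _ (hA𝒜 n)).1
  have hD𝒜 : ∀ m, D m ∈ 𝒜 := fun m =>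
    (hA _ (hU.accumulate_mem hA𝒜 m)).2 _ (hDA m) ((hDinf m m le_rfl).mono inter_subset_left)
  obtain ⟨B, hBℬ, hBcof⟩ := h D hD𝒜 fun _ _ => @hDdisj _ _
  refine ⟨B, hBℬ, fun n => ?_⟩
  obtain ⟨m, hmB, hnm⟩ := hBcof.exists_gt n
  refine ((hDinf m n hnm.le).sdiff hmB).mono ?_
  rintro x ⟨⟨hxD, hxA⟩, hxB⟩
  exact ⟨hxA, by_contra fun hx => hxB ⟨hxD, hx⟩⟩
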